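/- Let a > 0, μ > 0 and α > 0, and let v : ℝ² → ℝ² be continuously differentiable on a neighborhood of the circle {x ∈ ℝ² : |x| = a}, with v(x)·x = 0 for all x with |x| = a, and satisfying the Navier-slip condition on |x| = a. Then for every x with |x| = a, (∂₁v₂ − ∂₂v₁)(x) = (α/μ − 2/a) · (v(x)·τ(x)), where τ(x) = (x₂, −x₁)/a. -/

import Mathlib

/-!
Differentiating the tangency condition `v(y)·y = 0` along the circle (via the rotation curve
through `x`) gives `x·∂_τ v + v·τ = 0`. Substituting this into the Navier-slip condition turns the
strain term `Σ τ_i n_j (∂_i v_j + ∂_j v_i)` into `a² ω + 2 a v_τ` (up to the factor `a⁻²`), which is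
linear in the vorticity `ω`; solving for it gives `ω = (α/μ − 2/a) v_τ`.
-/

open Real MeasureTheory

noncomputable section

/-- Partial derivative `∂₁ f` of a scalar function on `ℝ²`. -/
def pd1 (f : ℝ × ℝ → ℝ) : ℝ × ℝ → ℝ := fun x => fderiv ℝ f x (1, 0)

/-- Partial derivative `∂₂ f` of a scalar function on `ℝ²`. -/
def pd2 (f : ℝ × ℝ → ℝ) : ℝ × ℝ → ℝ := fun x => fderiv ℝ f x (0, 1)

/-- First component of a vector field on `ℝ²`. -/
def cmp1 (v : ℝ × ℝ → ℝ × ℝ) : ℝ × ℝ → ℝ := fun x => (v x).1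

/-- Second component of a vector field on `ℝ²`. -/
def cmp2 (v : ℝ × ℝ → ℝ × ℝ) : ℝ × ℝ → ℝ := fun x => (v x).2

/-- The open annulus `Ω = {x ∈ ℝ² : a < |x| < b}`. -/
def ann (a b : ℝ) : Set (ℝ × ℝ) := {x | a ^ 2 < x.1 ^ 2 + x.2 ^ 2 ∧ x.1 ^ 2 + x.2 ^ 2 < b ^ 2}

/-- The closed annulus `{x ∈ ℝ² : a ≤ |x| ≤ b}`. -/
def cann (a b : ℝ) : Set (ℝ × ℝ) := {x | a ^ 2 ≤ x.1 ^ 2 + x.2 ^ 2 ∧ x.1 ^ 2 + x.2 ^ 2 ≤ b ^ 2}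

/-- The circle `∂B(0, r) = {x ∈ ℝ² : |x| = r}`. -/
def circ (r : ℝ) : Set (ℝ × ℝ) := {x | x.1 ^ 2 + x.2 ^ 2 = r ^ 2}

/-- Boundary integral `∮_{∂B(0,r)} f ds = ∫₀^{2π} f(r cos θ, r sin θ) r dθ`. -/
def bInt (r : ℝ) (f : ℝ × ℝ → ℝ) : ℝ :=
  ∫ θ in (0 : ℝ)..(2 * π), f (r * Real.cos θ, r * Real.sin θ) * r

/-- Tangential component `v_τ(x) = v(x)·(x₂, −x₁)/r` on the circle of radius `r`. -/
def tang (r : ℝ) (v : ℝ × ℝ → ℝ × ℝ) : ℝ × ℝ → ℝ :=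
  fun x => ((v x).1 * x.2 - (v x).2 * x.1) / r

/-- The Navier-slip condition on the inner circle `|x| = a`:
`μ Σ_{i,j} τ_i(x) n_j(x) (∂_i v_j(x) + ∂_j v_i(x)) = α v(x)·τ(x)` for all `|x| = a`,
where `n(x) = −x/a` and `τ(x) = (x₂, −x₁)/a`. -/
def navierSlip (μ α a : ℝ) (v : ℝ × ℝ → ℝ × ℝ) : Prop :=
  ∀ x : ℝ × ℝ, x.1 ^ 2 + x.2 ^ 2 = a ^ 2 →
    μ * ((x.2 / a) * (-(x.1 / a)) * (pd1 (cmp1 v) x + pd1 (cmp1 v) x)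
       + (x.2 / a) * (-(x.2 / a)) * (pd1 (cmp2 v) x + pd2 (cmp1 v) x)
       + (-(x.1 / a)) * (-(x.1 / a)) * (pd2 (cmp1 v) x + pd1 (cmp2 v) x)
       + (-(x.1 / a)) * (-(x.2 / a)) * (pd2 (cmp2 v) x + pd2 (cmp2 v) x))
    = α * ((v x).1 * (x.2 / a) + (v x).2 * (-(x.1 / a)))

def rotate (t : ℝ) (x : ℝ × ℝ) : ℝ × ℝ :=
  (x.1 * Real.cos t - x.2 * Real.sin t, x.1 * Real.sin t + x.2 * Real.cos t)

@[simp]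
lemma rotate_zero (x : ℝ × ℝ) : rotate 0 x = x := by
  simp [rotate]

lemma rotate_mem_circ {r : ℝ} {x : ℝ × ℝ} (hx : x ∈ circ r) (t : ℝ) : rotate t x ∈ circ r := by
  have hsc := Real.sin_sq_add_cos_sq t
  simp only [circ, rotate, Set.mem_ofPred_eq] at hx ⊢
  linear_combination (x.1 ^ 2 + x.2 ^ 2) * hsc + hx

lemma hasDerivAt_rotate (x : ℝ × ℝ) : HasDerivAt (fun t => rotate t x) (-x.2, x.1) 0 := by
  have hcos := Real.hasDerivAt_cos 0
  have hsin := Real.hasDerivAt_sin 0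
  simpa [rotate] using ((hcos.const_mul x.1).sub (hsin.const_mul x.2)).prodMk
    ((hsin.const_mul x.1).add (hcos.const_mul x.2))

lemma fderiv_apply_tangent_eq_zero_of_vanishes_on_circ {F : Type*} [NormedAddCommGroup F] [NormedSpace ℝ F]
    {f : ℝ × ℝ → F} {r : ℝ} {x : ℝ × ℝ} (hx : x ∈ circ r) (hf : DifferentiableAt ℝ f x)
    (hzero : ∀ y ∈ circ r, f y = 0) : fderiv ℝ f x (-x.2, x.1) = 0 := by
  have hcomp : HasDerivAt (fun t => f (rotate t x)) (fderiv ℝ f x (-x.2, x.1)) 0 := by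
    have hf' : HasFDerivAt f (fderiv ℝ f x) (rotate 0 x) := by
      rw [rotate_zero]
      exact hf.hasFDerivAt
    exact hf'.comp_hasDerivAt 0 (hasDerivAt_rotate x)
  have hconst : (fun t => f (rotate t x)) = fun _ => 0 :=
    funext fun t => hzero _ (rotate_mem_circ hx t)
  rw [hconst] at hcomp
  exact hcomp.unique (hasDerivAt_const 0 0)

lemma fderiv_apply_eq_add_pd (f : ℝ × ℝ → ℝ) (x w : ℝ × ℝ) :
    fderiv ℝ f x w = w.1 * pd1 f x + w.2 * pd2 f x := by
  have hw : w = w.1 • ((1 : ℝ), (0 : ℝ)) + w.2 • ((0 : ℝ), (1 : ℝ)) := by simp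
  conv_lhs => rw [hw]
  simp only [map_add, map_smul, smul_eq_mul, pd1, pd2]

/-- Differentiating `v(y)·y = 0` along the circle at `x`. -/
lemma tangent_field_derivative_along_circ {v : ℝ × ℝ → ℝ × ℝ} {r : ℝ} {x : ℝ × ℝ}
    (hx : x ∈ circ r) (hv : DifferentiableAt ℝ v x)
    (hvt : ∀ y ∈ circ r, (v y).1 * y.1 + (v y).2 * y.2 = 0) :
    x.1 * (-x.2 * pd1 (cmp1 v) x + x.1 * pd2 (cmp1 v) x)
      + x.2 * (-x.2 * pd1 (cmp2 v) x + x.1 * pd2 (cmp2 v) x)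
      + ((v x).1 * -x.2 + (v x).2 * x.1) = 0 := by
  have h1 : DifferentiableAt ℝ (cmp1 v) x := hv.fst
  have h2 : DifferentiableAt ℝ (cmp2 v) x := hv.snd
  have hderiv := (h1.hasFDerivAt.mul hasFDerivAt_fst).add (h2.hasFDerivAt.mul hasFDerivAt_snd)
  have hzero := fderiv_apply_tangent_eq_zero_of_vanishes_on_circ hx hderiv.differentiableAt hvt
  rw [hderiv.fderiv] at hzero
  simp only [add_apply, smul_apply, smul_eq_mul,
    ContinuousLinearMap.coe_fst', ContinuousLinearMap.coe_snd', fderiv_apply_eq_add_pd, cmp1, cmp2] at hzero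
  linear_combination hzero

theorem vorticity_boundary_value (a μ α : ℝ) (ha : 0 < a) (hμ : 0 < μ)
    (v : ℝ × ℝ → ℝ × ℝ)
    (U : Set (ℝ × ℝ)) (hU : IsOpen U) (hUc : circ a ⊆ U)
    (hv : ContDiffOn ℝ 1 v U)
    (hvt : ∀ x ∈ circ a, (v x).1 * x.1 + (v x).2 * x.2 = 0)
    (hns : navierSlip μ α a v) :
    ∀ x ∈ circ a,
      pd1 (cmp2 v) x - pd2 (cmp1 v) x
        = (α / μ - 2 / a) * ((v x).1 * (x.2 / a) + (v x).2 * (-(x.1 / a))) := by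
  intro x hx
  have hdv : DifferentiableAt ℝ v x :=
    (hv.contDiffAt (hU.mem_nhds (hUc hx))).differentiableAt one_ne_zero
  have htan := tangent_field_derivative_along_circ hx hdv hvt
  have hslip := hns x hx
  have hx' : x.1 ^ 2 + x.2 ^ 2 = a ^ 2 := hx
  have hvort : μ * a ^ 2 * (pd1 (cmp2 v) x - pd2 (cmp1 v) x)
      = (α * a - 2 * μ) * ((v x).1 * x.2 - (v x).2 * x.1) := by
    field_simp at hslip
    linear_combination hslip - 2 * μ * htan - μ * (pd1 (cmp2 v) x - pd2 (cmp1 v) x) * hx'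
  field_simp
  linear_combination hvort
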